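/- arXiv:0805.2917 — 5 statements merged into one kernel-verified Lean document; each statement's English description precedes it below -/
import Mathlib

section
/- Let l be a positive integer, let α = (α₁, α₂) ∈ ℝ_{≥0}^{2l} (with α₁, α₂ ∈ ℝ^l) be arranged in non-increasing order, and let β = (b₁·e_l, b₂·e_l) ∈ ℝ_{≥0}^{2l} with b₁ ≥ b₂ ≥ 0 (so β is arranged in non-increasing order, where e_l = (1,...,1) ∈ ℝ^l). If the sum of all entries of α is at least the sum of all entries of β, and the sum of the entries of α₁ is at least b₁·l, then β is submajorized by α. -/
open Matrix BigOperators
open scoped ComplexOrder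

noncomputable section

variable {𝕜 : Type*} [RCLike 𝕜]

/-- Sum of the `k` largest entries of a vector `x : Fin n → ℝ`,
as the supremum of the sums over subsets of cardinality `k`. -/
noncomputable def kMaxSum {n : ℕ} (x : Fin n → ℝ) (k : ℕ) : ℝ :=
  sSup ((fun t : Finset (Fin n) => ∑ i ∈ t, x i) '' {t : Finset (Fin n) | t.card = k})

/-- `x ≺_w y` : submajorization of real vectors. -/
def SubMajVec {n : ℕ} (x y : Fin n → ℝ) : Prop :=
  ∀ k : ℕ, k ≤ n → kMaxSum x k ≤ kMaxSum y k

/-- `A ≺_w B` : submajorization of self-adjoint matrices (via eigenvalues). -/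
def SubMajMat {n : ℕ} (A B : Matrix (Fin n) (Fin n) 𝕜) : Prop :=
  ∃ (hA : A.IsHermitian) (hB : B.IsHermitian), SubMajVec hA.eigenvalues hB.eigenvalues

/-- `A ≺ B` : majorization of self-adjoint matrices. -/
def MajMat {n : ℕ} (A B : Matrix (Fin n) (Fin n) 𝕜) : Prop :=
  SubMajMat A B ∧ A.trace = B.trace

/-- The q-potential `P_q(V) = Σ_{i,j} |V_i V_j*|²` of a reconstruction system. -/
noncomputable def qPotential {m l d : ℕ} (V : Fin m → Matrix (Fin l) (Fin d) 𝕜) :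
    Matrix (Fin l) (Fin l) 𝕜 :=
  ∑ i, ∑ j, (V i * (V j)ᴴ)ᴴ * (V i * (V j)ᴴ)

/-- `tr |A|² = tr(AᴴA)`, as a real number. -/
noncomputable def traceAbsSq {a b : ℕ} (A : Matrix (Fin a) (Fin b) 𝕜) : ℝ :=
  RCLike.re (Aᴴ * A).trace

/-- `tr |A| = tr((AᴴA)^{1/2})`, the sum of the singular values of `A`. -/
noncomputable def traceAbs {a b : ℕ} (A : Matrix (Fin a) (Fin b) 𝕜) : ℝ :=
  ∑ j, Real.sqrt ((Matrix.posSemidef_conjTranspose_mul_self A).1.eigenvalues j)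

/-- A unitarily invariant norm on `M_n(𝕜)`. -/
structure UINorm (n : ℕ) (𝕜 : Type*) [RCLike 𝕜] where
  N : Matrix (Fin n) (Fin n) 𝕜 → ℝ
  nonneg : ∀ A, 0 ≤ N A
  eq_zero : ∀ A, N A = 0 → A = 0
  triangle : ∀ A B, N (A + B) ≤ N A + N B
  smul_eq : ∀ (c : 𝕜) (A), N (c • A) = ‖c‖ * N A
  invariant : ∀ (A : Matrix (Fin n) (Fin n) 𝕜) (U W : Matrix.unitaryGroup (Fin n) 𝕜),
    N ((U : Matrix (Fin n) (Fin n) 𝕜) * A * (W : Matrix (Fin n) (Fin n) 𝕜)) = N A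

/-- `X ⊕ 0_t` : padding a square matrix with `t` zero rows and columns. -/
noncomputable def padMat {r : ℕ} (t : ℕ) (X : Matrix (Fin r) (Fin r) 𝕜) :
    Matrix (Fin (r + t)) (Fin (r + t)) 𝕜 :=
  Matrix.reindex finSumFinEquiv finSumFinEquiv (Matrix.fromBlocks X 0 0 0)

/-- A compatible unitarily invariant norm: a family of unitarily invariant norms,
one in each dimension, unchanged by adjoining zero rows and columns. -/
structure CUIN (𝕜 : Type*) [RCLike 𝕜] where
  N : ∀ n : ℕ, Matrix (Fin n) (Fin n) 𝕜 → ℝ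
  nonneg : ∀ n A, 0 ≤ N n A
  eq_zero : ∀ n A, N n A = 0 → A = 0
  triangle : ∀ n A B, N n (A + B) ≤ N n A + N n B
  smul_eq : ∀ n (c : 𝕜) (A), N n (c • A) = ‖c‖ * N n A
  invariant : ∀ n (A : Matrix (Fin n) (Fin n) 𝕜) (U W : Matrix.unitaryGroup (Fin n) 𝕜),
    N n ((U : Matrix (Fin n) (Fin n) 𝕜) * A * (W : Matrix (Fin n) (Fin n) 𝕜)) = N n A
  compatible : ∀ (r t : ℕ) (X : Matrix (Fin r) (Fin r) 𝕜), N (r + t) (padMat t X) = N r X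

namespace CUIN

/-- The associated symmetric gauge function, evaluated on a real vector:
`ψ(x) = ‖diag(x)‖`. -/
noncomputable def psi (Φ : CUIN 𝕜) {n : ℕ} (x : Fin n → ℝ) : ℝ :=
  Φ.N n (Matrix.diagonal fun i => (x i : 𝕜))

/-- `η_ψ(l) = ψ(e_l)/l = ‖I_l‖/l`. -/
noncomputable def eta (Φ : CUIN 𝕜) (l : ℕ) : ℝ := Φ.N l 1 / l

/-- A compatible u.i.n. is strict if `‖A‖ = tr(A)·η_ψ(l)` for positive semidefinite `A`
forces `A = (tr A / l)·I`. -/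
def Strict (Φ : CUIN 𝕜) : Prop :=
  ∀ (l : ℕ) (A : Matrix (Fin l) (Fin l) 𝕜), A.PosSemidef →
    Φ.N l A = RCLike.re A.trace * Φ.eta l → A = (A.trace / (l : 𝕜)) • 1

/-- A 2-strongly strict compatible u.i.n.: strict, and on `M_2` any two self-adjoint
matrices `A ≺ B` with equal norms are unitarily equivalent. -/
def TwoStronglyStrict (Φ : CUIN 𝕜) : Prop :=
  Φ.Strict ∧ ∀ A B : Matrix (Fin 2) (Fin 2) 𝕜, A.IsHermitian → B.IsHermitian →
    MajMat A B → Φ.N 2 A = Φ.N 2 B →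
    ∃ U ∈ Matrix.unitaryGroup (Fin 2) 𝕜, A = star U * B * U

end CUIN

/-- Worst-case reconstruction error for `p` lost packets:
`e_p^ψ(V) = max_{|K| = p} ‖V*V − V*E_K V‖ = max_{|K| = p} ‖Σ_{i ∈ K} Vᵢ*Vᵢ‖`. -/
noncomputable def errP {m l d : ℕ} (Φ : CUIN 𝕜) (p : ℕ)
    (V : Fin m → Matrix (Fin l) (Fin d) 𝕜) : ℝ :=
  sSup {r : ℝ | ∃ K : Finset (Fin m), K.card = p ∧ r = Φ.N d (∑ i ∈ K, (V i)ᴴ * V i)}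

/-- The constant `c_{m,l,d} = √( (d/((m−1)·m·l))·(1 − d/(ml)) )`. -/
noncomputable def cmld (m l d : ℕ) : ℝ :=
  Real.sqrt ((d : ℝ) / (((m : ℝ) - 1) * m * l) * (1 - (d : ℝ) / ((m : ℝ) * l)))

/-- A uniformly weighted projective rank-`l` `(m,l,d)`-protocol:
`Σᵢ Vᵢ*Vᵢ = I_d` and `VᵢVᵢ* = (d/(ml))·I_l` for every `i`. -/
def IsUWP {m l d : ℕ} (V : Fin m → Matrix (Fin l) (Fin d) 𝕜) : Prop :=
  (∑ i, (V i)ᴴ * V i = 1) ∧ ∀ i, V i * (V i)ᴴ = ((d : 𝕜) / ((m : 𝕜) * (l : 𝕜))) • 1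

/-- A uniformly weighted projective rank-`l` `(m,l,d)`-protocol, stated via projections:
`Σᵢ Vᵢ*Vᵢ = I_d` and `Vᵢ*Vᵢ = (d/(ml))·Pᵢ` with `Pᵢ` rank-`l` orthogonal projections. -/
def IsUWPProj {m l d : ℕ} (V : Fin m → Matrix (Fin l) (Fin d) 𝕜) : Prop :=
  (∑ i, (V i)ᴴ * V i = 1) ∧ ∀ i, ∃ P : Matrix (Fin d) (Fin d) 𝕜,
    Pᴴ = P ∧ P * P = P ∧ P.rank = l ∧ (V i)ᴴ * V i = ((d : 𝕜) / ((m : 𝕜) * (l : 𝕜))) • P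

/-- Padding a vector with zeros to length `d`. -/
def padVec {l : ℕ} (d : ℕ) (x : Fin l → ℝ) : Fin d → ℝ :=
  fun j => if h : (j : ℕ) < l then x ⟨j, h⟩ else 0

end

/-!
For a non-increasing vector the sum of its `k` largest entries is the sum of its first `k`
entries, and the average of the first `k` entries is at least the average of all of them.
For `k ≤ l` this gives `∑_{i<k} α₁ i ≥ (k / l) ∑ α₁ ≥ k b₁`. For `k = l + j` the first `k`
entries of `α` sum to at least `∑ α₁ + (j / l) ∑ α₂`, a convex combination of `∑ α₁ ≥ l b₁`
and `∑ α₁ + ∑ α₂ ≥ l b₁ + l b₂` with weights `1 - j / l` and `j / l`, hence at least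
`l b₁ + j b₂`.
-/

open Finset

lemma Fin.val_le_of_strictMono {k n : ℕ} {g : Fin k → Fin n} (hg : StrictMono g) (i : Fin k) :
    (i : ℕ) ≤ g i := by
  simpa using card_le_card_of_injOn g (s := Iio i) (t := Iio (g i))
    (fun j hj => by simpa using hg (by simpa using hj)) hg.injective.injOn

lemma Fin.sum_castLE_append_of_le {M : Type*} [AddCommMonoid M] {m n k : ℕ}
    (a : Fin m → M) (b : Fin n → M) (h : k ≤ m + n) (hk : k ≤ m) :
    ∑ i : Fin k, Fin.append a b (Fin.castLE h i) = ∑ i : Fin k, a (Fin.castLE hk i) := by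
  refine sum_congr rfl fun i _ => ?_
  rw [show Fin.castLE h i = Fin.castAdd n (Fin.castLE hk i) from rfl, Fin.append_left]

lemma Fin.sum_castLE_append_add {M : Type*} [AddCommMonoid M] {m n j : ℕ}
    (a : Fin m → M) (b : Fin n → M) (h : m + j ≤ m + n) (hj : j ≤ n) :
    ∑ i : Fin (m + j), Fin.append a b (Fin.castLE h i) =
      ∑ i, a i + ∑ i : Fin j, b (Fin.castLE hj i) := by
  rw [Fin.sum_univ_add]
  congr 1 <;> refine sum_congr rfl fun i _ => ?_
  · rw [show Fin.castLE h (Fin.castAdd j i) = Fin.castAdd n i from rfl, Fin.append_left]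
  · rw [show Fin.castLE h (Fin.natAdd m i) = Fin.natAdd m (Fin.castLE hj i) from rfl,
      Fin.append_right]

lemma Fin.antitone_append_const {m n : ℕ} {b₁ b₂ : ℝ} (hb : b₂ ≤ b₁) :
    Antitone (Fin.append (Function.const (Fin m) b₁) (Function.const (Fin n) b₂)) := by
  intro i j hij
  cases i using Fin.addCases <;> cases j using Fin.addCases <;>
    simp only [Fin.append_left, Fin.append_right, Function.const_apply, le_refl, hb]
  rename_i i j
  simp only [Fin.le_def, Fin.val_natAdd, Fin.val_castAdd] at hij
  omega

lemma Antitone.sum_le_sum_castLE {n k : ℕ} {x : Fin n → ℝ} (hx : Antitone x) (hk : k ≤ n)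
    (t : Finset (Fin n)) (ht : #t = k) : ∑ i ∈ t, x i ≤ ∑ i : Fin k, x (Fin.castLE hk i) := by
  rw [← map_orderEmbOfFin_univ t ht, sum_map]
  exact sum_le_sum fun i _ => hx (Fin.val_le_of_strictMono (t.orderEmbOfFin ht).strictMono i)

lemma Antitone.kMaxSum_eq {n k : ℕ} {x : Fin n → ℝ} (hx : Antitone x) (hk : k ≤ n) :
    kMaxSum x k = ∑ i : Fin k, x (Fin.castLE hk i) := by
  refine IsGreatest.csSup_eq ⟨⟨univ.map (Fin.castLEEmb hk), by simp, by simp⟩, ?_⟩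
  rintro _ ⟨t, ht, rfl⟩
  exact hx.sum_le_sum_castLE hk t ht

lemma Antitone.card_mul_sum_le_mul_sum_castLE {n k : ℕ} {x : Fin n → ℝ} (hx : Antitone x)
    (hk : k ≤ n) : (k : ℝ) * ∑ i, x i ≤ n * ∑ i : Fin k, x (Fin.castLE hk i) := by
  obtain ⟨m, rfl⟩ := Nat.exists_eq_add_of_le hk
  have tail_le_head : (k : ℝ) * ∑ j : Fin m, x (Fin.natAdd k j) ≤
      m * ∑ i : Fin k, x (Fin.castAdd m i) := by
    calc (k : ℝ) * ∑ j : Fin m, x (Fin.natAdd k j)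
        = ∑ _i : Fin k, ∑ j : Fin m, x (Fin.natAdd k j) := by simp
      _ ≤ ∑ i : Fin k, ∑ _j : Fin m, x (Fin.castAdd m i) :=
          sum_le_sum fun i _ => sum_le_sum fun j _ =>
            hx (Fin.le_def.mpr (by simp only [Fin.val_castAdd, Fin.val_natAdd]; omega))
      _ = m * ∑ i : Fin k, x (Fin.castAdd m i) := by simp [mul_sum]
  rw [Fin.sum_univ_add]
  push_cast
  change _ ≤ _ * ∑ i : Fin k, x (Fin.castAdd m i)
  linarith

lemma Antitone.mul_le_sum_castLE {n k : ℕ} {x : Fin n → ℝ} {b : ℝ} (hx : Antitone x)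
    (hn : 0 < n) (hk : k ≤ n) (hb : n * b ≤ ∑ i, x i) :
    k * b ≤ ∑ i : Fin k, x (Fin.castLE hk i) := by
  refine le_of_mul_le_mul_left ?_ (Nat.cast_pos.mpr hn)
  calc (n : ℝ) * (k * b) = k * (n * b) := by ring
    _ ≤ k * ∑ i, x i := mul_le_mul_of_nonneg_left hb k.cast_nonneg
    _ ≤ n * ∑ i : Fin k, x (Fin.castLE hk i) := hx.card_mul_sum_le_mul_sum_castLE hk

theorem stmt0_general (l : ℕ) (hl : 0 < l) (α₁ α₂ : Fin l → ℝ) (b₁ b₂ : ℝ)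
    (hα_dec : Antitone (Fin.append α₁ α₂))
    (hb : b₂ ≤ b₁)
    (htr : (l : ℝ) * b₁ + (l : ℝ) * b₂ ≤ ∑ i, Fin.append α₁ α₂ i)
    (htr₁ : (l : ℝ) * b₁ ≤ ∑ i, α₁ i) :
    SubMajVec (Fin.append (Function.const (Fin l) b₁) (Function.const (Fin l) b₂))
      (Fin.append α₁ α₂) := by
  have hα₁ : Antitone α₁ := by
    simpa only [Function.comp_def, Fin.append_left] using
      hα_dec.comp_monotone (Fin.strictMono_castAdd l).monotone
  have hα₂ : Antitone α₂ := by
    simpa only [Function.comp_def, Fin.append_right] using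
      hα_dec.comp_monotone (Fin.strictMono_natAdd l).monotone
  intro k hk
  rw [(Fin.antitone_append_const hb).kMaxSum_eq hk, hα_dec.kMaxSum_eq hk]
  rcases le_or_gt k l with hkl | hlk
  · rw [Fin.sum_castLE_append_of_le _ _ hk hkl, Fin.sum_castLE_append_of_le _ _ hk hkl]
    simpa using hα₁.mul_le_sum_castLE hl hkl htr₁
  · obtain ⟨j, rfl⟩ := Nat.exists_eq_add_of_le hlk.le
    have hj : j ≤ l := by omega
    rw [Fin.sum_castLE_append_add _ _ hk hj, Fin.sum_castLE_append_add _ _ hk hj]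
    simp only [Fin.sum_univ_add, Fin.append_left, Fin.append_right] at htr
    simp only [Function.const_apply, sum_const, card_univ, Fintype.card_fin, nsmul_eq_mul]
    have hjl : (j : ℝ) ≤ l := by exact_mod_cast hj
    refine le_of_mul_le_mul_left ?_ (Nat.cast_pos.mpr hl)
    calc (l : ℝ) * (l * b₁ + j * b₂) = (l - j) * (l * b₁) + j * (l * b₁ + l * b₂) := by ring
      _ ≤ (l - j) * ∑ i, α₁ i + j * (∑ i, α₁ i + ∑ i, α₂ i) := by gcongr
      _ ≤ l * (∑ i, α₁ i + ∑ i : Fin j, α₂ (Fin.castLE hj i)) := by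
          linarith [hα₂.card_mul_sum_le_mul_sum_castLE hj]

theorem stmt0 (l : ℕ) (hl : 0 < l) (α₁ α₂ : Fin l → ℝ) (b₁ b₂ : ℝ)
    (hα_nonneg : ∀ i : Fin (l + l), 0 ≤ Fin.append α₁ α₂ i)
    (hα_dec : Antitone (Fin.append α₁ α₂))
    (hb : b₂ ≤ b₁) (hb₂ : 0 ≤ b₂)
    (htr : (l : ℝ) * b₁ + (l : ℝ) * b₂ ≤ ∑ i, Fin.append α₁ α₂ i)
    (htr₁ : (l : ℝ) * b₁ ≤ ∑ i, α₁ i) :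
    SubMajVec (Fin.append (Function.const (Fin l) b₁) (Function.const (Fin l) b₂))
      (Fin.append α₁ α₂) :=
  stmt0_general l hl α₁ α₂ b₁ b₂ hα_dec hb htr htr₁
end

section
/- Let {V_i}_{i=1}^m be an (m,l,d)-reconstruction system with analysis operator V such that tr(V*V) = Σ_{i=1}^m tr(V_i*V_i) ≥ d. Then (d/l)·I_l is submajorized by P_q(V); consequently, for every unitarily invariant norm ‖·‖ on M_l(ℂ) with associated symmetric gauge function ψ one has d·η_ψ(l) ≤ ‖P_q(V)‖, and for every increasing convex function f : ℝ_{≥0} → ℝ with f(0) = 0 one has l·f(d/l) ≤ tr(f(P_q(V))). -/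
open Matrix BigOperators
open scoped ComplexOrder

/-!
With `S = ∑ᵢ Vᵢᴴ Vᵢ`, cycling the trace gives `tr P_q(V) = tr S²`, and Cauchy–Schwarz on the
diagonal of `S` gives `d · tr S² ≥ (tr S)² ≥ d²`, hence `tr P_q(V) ≥ d`. Each claim then follows
from this trace bound for the positive semidefinite matrix `P = P_q(V)`: the `k` largest of `l`
reals sum to at least `k/l` of their total (average over all `k`-subsets); averaging
`diag(λ(P))` over the cyclic shifts of its entries gives `(tr P) · I`, so a unitarily invariant
norm satisfies `tr P · ‖I‖ ≤ l · ‖P‖`; and Jensen's inequality with the monotonicity of `f` gives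
`l · f(d/l) ≤ l · f(tr P / l) ≤ ∑ f(λᵢ)`.
-/

open Finset

lemma sum_powersetCard_sum {α : Type*} [Fintype α] [DecidableEq α] (x : α → ℝ) (k : ℕ) :
    ∑ t ∈ univ.powersetCard (k + 1), ∑ i ∈ t, x i
      = ((Fintype.card α - 1).choose k : ℝ) * ∑ i, x i := by
  rw [sum_comm' (t' := univ) (s' := fun i => {t ∈ univ.powersetCard (k + 1) | i ∈ t})
    (fun t i => by simp [and_comm]), mul_sum]
  refine sum_congr rfl fun i _ => ?_
  have hcard := card_filter_powersetCard_subset {i} univ (k + 1) (subset_univ _) (by simp)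
  simp only [singleton_subset_iff, card_singleton, card_univ, add_tsub_cancel_right] at hcard
  rw [sum_const, hcard, nsmul_eq_mul]

lemma exists_card_eq_div_mul_sum_le {α : Type*} [Fintype α] [DecidableEq α] (x : α → ℝ) {k : ℕ}
    (hk : k ≤ Fintype.card α) :
    ∃ t : Finset α, #t = k ∧ (k / Fintype.card α : ℝ) * ∑ i, x i ≤ ∑ i ∈ t, x i := by
  obtain _ | k := k
  · exact ⟨∅, rfl, by simp⟩
  set n := Fintype.card α
  have hne : (univ.powersetCard (k + 1) : Finset (Finset α)).Nonempty :=
    powersetCard_nonempty.2 (by simpa using hk)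
  have hchoose : (n.choose (k + 1) : ℝ) * ((k + 1 : ℕ) / n) = ((n - 1).choose k : ℝ) := by
    obtain ⟨n', hn'⟩ : ∃ n', n = n' + 1 := ⟨n - 1, by omega⟩
    rw [hn', add_tsub_cancel_right, mul_div_assoc', div_eq_iff (by positivity)]
    exact_mod_cast (Nat.add_one_mul_choose_eq n' k).symm.trans (mul_comm _ _)
  obtain ⟨t, ht, hle⟩ := exists_le_of_sum_le hne (f := fun _ => ((k + 1 : ℕ) / n : ℝ) * ∑ i, x i)
    (g := fun t => ∑ i ∈ t, x i) (by
      rw [sum_const, card_powersetCard, card_univ, sum_powersetCard_sum, nsmul_eq_mul,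
        ← mul_assoc, hchoose])
  exact ⟨t, (mem_powersetCard.1 ht).2, hle⟩

section kMaxSum

variable {n : ℕ}

lemma sum_le_kMaxSum (x : Fin n → ℝ) (t : Finset (Fin n)) : ∑ i ∈ t, x i ≤ kMaxSum x #t :=
  le_csSup (Set.toFinite _).bddAbove ⟨t, rfl, rfl⟩

lemma kMaxSum_le {x : Fin n → ℝ} {k : ℕ} {c : ℝ} (hk : k ≤ n)
    (h : ∀ t : Finset (Fin n), #t = k → ∑ i ∈ t, x i ≤ c) : kMaxSum x k ≤ c := by
  obtain ⟨t, -, ht⟩ := exists_subset_card_eq (s := (univ : Finset (Fin n))) (by simpa using hk)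
  exact csSup_le ⟨_, t, ht, rfl⟩ fun _ ⟨t, ht, hsum⟩ => hsum ▸ h t ht

lemma div_mul_sum_le_kMaxSum (x : Fin n → ℝ) {k : ℕ} (hk : k ≤ n) :
    (k / n : ℝ) * ∑ i, x i ≤ kMaxSum x k := by
  obtain ⟨t, rfl, ht⟩ := exists_card_eq_div_mul_sum_le x (k := k) (by simpa using hk)
  simpa using ht.trans (sum_le_kMaxSum x t)

lemma subMajVec_const_of_le_sum_div {c : ℝ} {y : Fin n → ℝ} (h : c ≤ (∑ i, y i) / n) :
    SubMajVec (fun _ => c) y := by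
  intro k hk
  refine (kMaxSum_le hk fun t ht => ?_).trans (div_mul_sum_le_kMaxSum y hk)
  calc ∑ _i ∈ t, c = k * c := by rw [sum_const, ht, nsmul_eq_mul]
    _ ≤ k * ((∑ i, y i) / n) := by gcongr
    _ = (k / n : ℝ) * ∑ i, y i := by ring

end kMaxSum

section Hermitian

variable {𝕜 : Type*} [RCLike 𝕜] {ι : Type*} [Fintype ι] [DecidableEq ι]

lemma Matrix.IsHermitian.re_trace_eq_sum_eigenvalues {A : Matrix ι ι 𝕜} (hA : A.IsHermitian) :
    RCLike.re A.trace = ∑ i, hA.eigenvalues i := by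
  simp [hA.trace_eq_sum_eigenvalues]

lemma Matrix.IsHermitian.eigenvalues_ofReal_smul_one {c : ℝ}
    (h : ((c : 𝕜) • (1 : Matrix ι ι 𝕜)).IsHermitian) : h.eigenvalues = fun _ => c := by
  funext i
  rw [h.eigenvalues_eq, smul_mulVec, one_mulVec, dotProduct_smul, dotProduct_comm,
    ← EuclideanSpace.inner_eq_star_dotProduct, inner_self_eq_norm_sq_to_K,
    h.eigenvectorBasis.orthonormal.1 i]
  simp

lemma subMajMat_ofReal_smul_one {n : ℕ} {c : ℝ} {B : Matrix (Fin n) (Fin n) 𝕜}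
    (hB : B.IsHermitian) (h : c ≤ RCLike.re B.trace / n) :
    SubMajMat ((c : 𝕜) • (1 : Matrix (Fin n) (Fin n) 𝕜)) B := by
  have hc : ((c : 𝕜) • (1 : Matrix (Fin n) (Fin n) 𝕜)).IsHermitian := by
    simp [IsHermitian, conjTranspose_smul]
  refine ⟨hc, hB, ?_⟩
  rw [hc.eigenvalues_ofReal_smul_one]
  exact subMajVec_const_of_le_sum_div (hB.re_trace_eq_sum_eigenvalues ▸ h)

end Hermitian

section Trace

variable {𝕜 : Type*} [RCLike 𝕜]

lemma re_trace_conjTranspose_mul_self {m n : Type*} [Fintype m] [Fintype n] (A : Matrix m n 𝕜) :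
    RCLike.re (Aᴴ * A).trace = ∑ j, ∑ i, ‖A i j‖ ^ 2 := by
  simp only [trace, diag_apply, mul_apply, conjTranspose_apply, map_sum, RCLike.star_def,
    RCLike.conj_mul, ← RCLike.ofReal_pow, RCLike.ofReal_re]

lemma sq_re_trace_le_card_mul_re_trace_conjTranspose_mul_self {n : Type*} [Fintype n]
    (A : Matrix n n 𝕜) :
    RCLike.re A.trace ^ 2 ≤ Fintype.card n * RCLike.re (Aᴴ * A).trace := by
  have hdiag : ∑ j, RCLike.re (A j j) ^ 2 ≤ RCLike.re (Aᴴ * A).trace := by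
    rw [re_trace_conjTranspose_mul_self]
    refine sum_le_sum fun j _ => ?_
    calc RCLike.re (A j j) ^ 2 ≤ ‖A j j‖ ^ 2 := by
          simpa only [sq_abs] using pow_le_pow_left₀ (abs_nonneg _) (RCLike.abs_re_le_norm _) 2
      _ ≤ ∑ i, ‖A i j‖ ^ 2 :=
          single_le_sum (f := fun i => ‖A i j‖ ^ 2) (fun i _ => by positivity) (mem_univ j)
  calc RCLike.re A.trace ^ 2 = (∑ j, RCLike.re (A j j)) ^ 2 := by simp [trace]
    _ ≤ Fintype.card n * ∑ j, RCLike.re (A j j) ^ 2 := by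
        simpa using sq_sum_le_card_mul_sum_sq (s := univ) (f := fun j => RCLike.re (A j j))
    _ ≤ Fintype.card n * RCLike.re (Aᴴ * A).trace := by gcongr

lemma le_re_trace_conjTranspose_mul_self {n : ℕ} {A : Matrix (Fin n) (Fin n) 𝕜}
    (h : (n : ℝ) ≤ RCLike.re A.trace) : (n : ℝ) ≤ RCLike.re (Aᴴ * A).trace := by
  have hCS := sq_re_trace_le_card_mul_re_trace_conjTranspose_mul_self A
  have hnonneg : 0 ≤ RCLike.re (Aᴴ * A).trace :=
    (RCLike.nonneg_iff.1 (posSemidef_conjTranspose_mul_self A).trace_nonneg).1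
  rw [Fintype.card_fin] at hCS
  nlinarith

variable {m l d : ℕ}

lemma trace_qPotential (V : Fin m → Matrix (Fin l) (Fin d) 𝕜) :
    (qPotential V).trace = ((∑ i, (V i)ᴴ * V i) * ∑ i, (V i)ᴴ * V i).trace := by
  simp only [qPotential, Finset.sum_mul_sum, trace_sum]
  refine Finset.sum_congr rfl fun i _ => Finset.sum_congr rfl fun j _ => ?_
  rw [conjTranspose_mul, conjTranspose_conjTranspose, Matrix.mul_assoc, trace_mul_comm]
  simp only [Matrix.mul_assoc]

lemma posSemidef_qPotential (V : Fin m → Matrix (Fin l) (Fin d) 𝕜) :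
    (qPotential V).PosSemidef :=
  posSemidef_sum _ fun _ _ => posSemidef_sum _ fun _ _ => posSemidef_conjTranspose_mul_self _

lemma le_re_trace_qPotential (V : Fin m → Matrix (Fin l) (Fin d) 𝕜)
    (h : (d : ℝ) ≤ ∑ i, RCLike.re ((V i)ᴴ * V i).trace) :
    (d : ℝ) ≤ RCLike.re (qPotential V).trace := by
  have hS : (∑ i, (V i)ᴴ * V i).IsHermitian :=
    (posSemidef_sum _ fun i _ => posSemidef_conjTranspose_mul_self (V i)).1
  have hS_trace : (d : ℝ) ≤ RCLike.re (∑ i, (V i)ᴴ * V i).trace := by rwa [trace_sum, map_sum]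
  simpa only [hS.eq, ← trace_qPotential] using le_re_trace_conjTranspose_mul_self hS_trace

end Trace

lemma Matrix.permMatrix_mem_unitaryGroup {𝕜 : Type*} [RCLike 𝕜] {n : Type*} [Fintype n]
    [DecidableEq n] (σ : Equiv.Perm n) : σ.permMatrix 𝕜 ∈ unitaryGroup n 𝕜 := by
  rw [mem_unitaryGroup_iff, star_eq_conjTranspose, conjTranspose_permMatrix, ← permMatrix_mul,
    inv_mul_cancel, permMatrix_one]

lemma Matrix.permMatrix_mul_diagonal_mul_permMatrix_inv {R : Type*} [CommRing R] {n : Type*}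
    [Fintype n] [DecidableEq n] (σ : Equiv.Perm n) (y : n → R) :
    σ.permMatrix R * diagonal y * σ⁻¹.permMatrix R = diagonal (y ∘ σ) := by
  rw [PEquiv.toMatrix_toPEquiv_mul, PEquiv.mul_toMatrix_toPEquiv, Equiv.Perm.inv_def,
    Equiv.symm_symm, submatrix_submatrix, Function.id_comp, Function.comp_id,
    submatrix_diagonal_equiv]

namespace UINorm

variable {𝕜 : Type*} [RCLike 𝕜] {n : ℕ} (Ψ : UINorm n 𝕜)

lemma N_zero : Ψ.N 0 = 0 := by
  simpa using Ψ.smul_eq 0 0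

lemma N_sum_le {ι : Type*} (s : Finset ι) (A : ι → Matrix (Fin n) (Fin n) 𝕜) :
    Ψ.N (∑ i ∈ s, A i) ≤ ∑ i ∈ s, Ψ.N (A i) :=
  le_sum_of_subadditive Ψ.N Ψ.N_zero.le Ψ.triangle s A

lemma N_diagonal_comp_perm (y : Fin n → 𝕜) (σ : Equiv.Perm (Fin n)) :
    Ψ.N (diagonal (y ∘ σ)) = Ψ.N (diagonal y) := by
  rw [← permMatrix_mul_diagonal_mul_permMatrix_inv]
  exact Ψ.invariant _ ⟨_, permMatrix_mem_unitaryGroup σ⟩ ⟨_, permMatrix_mem_unitaryGroup σ⁻¹⟩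

lemma N_eq_N_diagonal_eigenvalues {A : Matrix (Fin n) (Fin n) 𝕜} (hA : A.IsHermitian) :
    Ψ.N A = Ψ.N (diagonal (RCLike.ofReal ∘ hA.eigenvalues)) := by
  conv_lhs => rw [hA.spectral_theorem, Unitary.conjStarAlgAut_apply]
  exact Ψ.invariant _ hA.eigenvectorUnitary (star hA.eigenvectorUnitary)

lemma norm_sum_mul_N_one_le (y : Fin n → 𝕜) : ‖∑ i, y i‖ * Ψ.N 1 ≤ n * Ψ.N (diagonal y) := by
  obtain _ | n := n
  · simp
  have hshift : ∑ t : Fin (n + 1), diagonal (y ∘ Equiv.addLeft t) = (∑ i, y i) • 1 := by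
    rw [smul_one_eq_diagonal]
    ext a b
    simp only [Matrix.sum_apply, diagonal_apply, Function.comp_apply, Equiv.coe_addLeft]
    split_ifs
    · exact Equiv.sum_comp (Equiv.addRight a) y
    · exact sum_const_zero
  calc ‖∑ i, y i‖ * Ψ.N 1 = Ψ.N (∑ t : Fin (n + 1), diagonal (y ∘ Equiv.addLeft t)) := by
        rw [hshift, Ψ.smul_eq]
    _ ≤ ∑ t : Fin (n + 1), Ψ.N (diagonal (y ∘ Equiv.addLeft t)) := Ψ.N_sum_le _ _
    _ = (n + 1 : ℕ) * Ψ.N (diagonal y) := by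
        simp only [N_diagonal_comp_perm, sum_const, card_univ, Fintype.card_fin, nsmul_eq_mul]

lemma norm_trace_mul_N_one_le {A : Matrix (Fin n) (Fin n) 𝕜} (hA : A.IsHermitian) :
    ‖A.trace‖ * Ψ.N 1 ≤ n * Ψ.N A := by
  rw [Ψ.N_eq_N_diagonal_eigenvalues hA, hA.trace_eq_sum_eigenvalues]
  exact Ψ.norm_sum_mul_N_one_le _

end UINorm

lemma ConvexOn.card_mul_map_sum_div_card_le {ι : Type*} [Fintype ι] {s : Set ℝ} {f : ℝ → ℝ}
    (hf : ConvexOn ℝ s f) {x : ι → ℝ} (hx : ∀ i, x i ∈ s) :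
    Fintype.card ι * f ((∑ i, x i) / Fintype.card ι) ≤ ∑ i, f (x i) := by
  rcases isEmpty_or_nonempty ι with hι | hι
  · simp
  have hcard : (0 : ℝ) < Fintype.card ι := by exact_mod_cast Fintype.card_pos
  have hJensen := hf.map_sum_le (t := univ) (w := fun _ => (Fintype.card ι : ℝ)⁻¹) (p := x)
    (fun _ _ => by positivity) (by simp [hcard.ne']) (fun i _ => hx i)
  simp only [smul_eq_mul, ← mul_sum] at hJensen
  rw [div_eq_inv_mul]
  calc (Fintype.card ι : ℝ) * f ((Fintype.card ι : ℝ)⁻¹ * ∑ i, x i)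
      ≤ Fintype.card ι * ((Fintype.card ι : ℝ)⁻¹ * ∑ i, f (x i)) := by gcongr
    _ = ∑ i, f (x i) := by field_simp

theorem stmt1_general (m l d : ℕ)
    (V : Fin m → Matrix (Fin l) (Fin d) ℂ)
    (htr : (d : ℝ) ≤ ∑ i, RCLike.re ((V i)ᴴ * V i).trace) :
    SubMajMat (((d : ℂ) / (l : ℂ)) • (1 : Matrix (Fin l) (Fin l) ℂ)) (qPotential V) ∧
    (∀ Ψ : UINorm l ℂ, (d : ℝ) * (Ψ.N 1 / l) ≤ Ψ.N (qPotential V)) ∧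
    (∀ f : ℝ → ℝ, MonotoneOn f (Set.Ici 0) → ConvexOn ℝ (Set.Ici 0) f → f 0 = 0 →
      ∀ hP : (qPotential V).IsHermitian,
        (l : ℝ) * f ((d : ℝ) / l) ≤ ∑ i, f (hP.eigenvalues i)) := by
  have hP := posSemidef_qPotential V
  have hd_le_trace := le_re_trace_qPotential V htr
  refine ⟨?_, fun Ψ => ?_, fun f hmono hconv _ hP' => ?_⟩
  · rw [show (d : ℂ) / l = ((d / l : ℝ) : ℂ) by push_cast; rfl]
    exact subMajMat_ofReal_smul_one hP.1 (div_le_div_of_nonneg_right hd_le_trace l.cast_nonneg)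
  · rw [mul_div_assoc']
    refine div_le_of_le_mul₀ (Nat.cast_nonneg l) (Ψ.nonneg _) ?_
    calc (d : ℝ) * Ψ.N 1 ≤ ‖(qPotential V).trace‖ * Ψ.N 1 :=
          mul_le_mul_of_nonneg_right (hd_le_trace.trans (RCLike.re_le_norm _)) (Ψ.nonneg 1)
      _ ≤ l * Ψ.N (qPotential V) := Ψ.norm_trace_mul_N_one_le hP.1
      _ = Ψ.N (qPotential V) * l := mul_comm _ _
  · have hsum : (d : ℝ) ≤ ∑ i, hP'.eigenvalues i := hP'.re_trace_eq_sum_eigenvalues ▸ hd_le_trace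
    have hnonneg : ∀ i, hP'.eigenvalues i ∈ Set.Ici 0 := hP.eigenvalues_nonneg
    calc (l : ℝ) * f (d / l) ≤ l * f ((∑ i, hP'.eigenvalues i) / l) := by
          gcongr
          exact hmono (Set.mem_Ici.2 (by positivity))
            (Set.mem_Ici.2 (div_nonneg (d.cast_nonneg.trans hsum) l.cast_nonneg))
            (div_le_div_of_nonneg_right hsum l.cast_nonneg)
      _ ≤ ∑ i, f (hP'.eigenvalues i) := by
          simpa using hconv.card_mul_map_sum_div_card_le hnonneg

theorem stmt1 (m l d : ℕ) (hl : 0 < l) (hld : l < d)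
    (V : Fin m → Matrix (Fin l) (Fin d) ℂ)
    (hinv : IsUnit (∑ i, (V i)ᴴ * V i))
    (htr : (d : ℝ) ≤ ∑ i, RCLike.re ((V i)ᴴ * V i).trace) :
    SubMajMat (((d : ℂ) / (l : ℂ)) • (1 : Matrix (Fin l) (Fin l) ℂ)) (qPotential V) ∧
    (∀ Ψ : UINorm l ℂ, (d : ℝ) * (Ψ.N 1 / l) ≤ Ψ.N (qPotential V)) ∧
    (∀ f : ℝ → ℝ, MonotoneOn f (Set.Ici 0) → ConvexOn ℝ (Set.Ici 0) f → f 0 = 0 →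
      ∀ hP : (qPotential V).IsHermitian,
        (l : ℝ) * f ((d : ℝ) / l) ≤ ∑ i, f (hP.eigenvalues i)) :=
  stmt1_general m l d V htr
end

section
/- If {V_i}_{i=1}^m is a projective rank-l (m,l,d)-protocol, then P_q(V) = (d/l)·I_l; in particular the majorization (d/l)·I_l ≺ P_q(V) holds, and for every unitarily invariant norm ‖·‖ on M_l(ℂ) one has ‖P_q(V)‖ = d·η_ψ(l), and tr(f(P_q(V))) = l·f(d/l) for every increasing convex f : ℝ_{≥0} → ℝ with f(0) = 0. -/
open Matrix BigOperators
open scoped ComplexOrder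

/-! Since `VᵢᴴVᵢ = wᵢPᵢ` with `Pᵢ` an idempotent of rank `l`, the `l × l` matrix `VᵢVᵢᴴ` has
rank `l`, hence is invertible, and `VᵢPᵢ = Vᵢ` gives `(VᵢVᵢᴴ)² = wᵢ VᵢVᵢᴴ`; so `VᵢVᵢᴴ = wᵢ I`.
As `Σ VᵢᴴVᵢ = I`, the q-potential collapses to `Σ VⱼVⱼᴴ = (Σ wⱼ) I`, and comparing traces gives
`l Σ wⱼ = d`. Every remaining claim is a property of the scalar matrix `(d/l) I`. -/

namespace Matrix

variable {m n 𝕜 : Type*} [Fintype m] [Fintype n] [DecidableEq m] [DecidableEq n] [RCLike 𝕜]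

theorem isUnit_of_rank_eq_card {K : Type*} [Field K] {A : Matrix n n K}
    (h : A.rank = Fintype.card n) : IsUnit A := by
  rw [← mulVec_surjective_iff_isUnit]
  have hrange : LinearMap.range A.mulVecLin = ⊤ := by
    apply Submodule.eq_top_of_finrank_eq
    rw [← rank, h, Module.finrank_fintype_fun_eq_card]
  exact LinearMap.range_eq_top.mp hrange

theorem mul_conjTranspose_eq_smul_one {A : Matrix m n 𝕜} {w : 𝕜} (hw : w ≠ 0)
    {P : Matrix n n 𝕜} (hP : IsIdempotentElem P) (hrank : P.rank = Fintype.card m)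
    (hA : Aᴴ * A = w • P) : A * Aᴴ = w • 1 := by
  have hAP : A * P = A := by
    have : (Aᴴ * A) * (P - 1) = 0 := by
      rw [hA, smul_mul, Matrix.mul_sub, hP.eq, Matrix.mul_one, sub_self, smul_zero]
    rw [conjTranspose_mul_self_mul_eq_zero, Matrix.mul_sub, Matrix.mul_one, sub_eq_zero] at this
    exact this
  have hsq : (A * Aᴴ) * (A * Aᴴ) = (w • 1) * (A * Aᴴ) := by
    rw [Matrix.mul_assoc, ← Matrix.mul_assoc Aᴴ, hA, smul_mul, Matrix.mul_smul,
      ← Matrix.mul_assoc, hAP, smul_mul, Matrix.one_mul]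
  have hunit : IsUnit (A * Aᴴ) := by
    apply isUnit_of_rank_eq_card
    rw [rank_self_mul_conjTranspose, ← rank_conjTranspose_mul_self, hA,
      rank_smul_of_mem_nonZeroDivisors _ (mem_nonZeroDivisors_of_ne_zero hw), hrank]
  exact hunit.mul_right_cancel hsq

theorem IsHermitian.eigenvalues_eq_of_eq_smul_one {A : Matrix n n 𝕜} (hA : A.IsHermitian)
    {c : ℝ} (h : A = (c : 𝕜) • 1) (i : n) : hA.eigenvalues i = c := by
  have : Nonempty n := ⟨i⟩
  have hspec : spectrum ℝ A = {c} := by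
    rw [h, ← RCLike.real_smul_eq_coe_smul, ← Algebra.algebraMap_eq_smul_one, spectrum.scalar_eq]
  simpa [hspec] using hA.eigenvalues_mem_spectrum_real i

end Matrix

section

variable {𝕜 : Type*} [RCLike 𝕜] {m l d : ℕ}

theorem MajMat.refl {n : ℕ} {A : Matrix (Fin n) (Fin n) 𝕜} (hA : A.IsHermitian) : MajMat A A :=
  ⟨⟨hA, hA, fun _ _ => le_rfl⟩, rfl⟩

theorem qPotential_eq_sum_mul_conjTranspose {V : Fin m → Matrix (Fin l) (Fin d) 𝕜}
    (hV : ∑ i, (V i)ᴴ * V i = 1) : qPotential V = ∑ j, V j * (V j)ᴴ := by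
  have hcol : ∀ j, ∑ i, (V i * (V j)ᴴ)ᴴ * (V i * (V j)ᴴ) = V j * (V j)ᴴ := fun j => by
    calc ∑ i, (V i * (V j)ᴴ)ᴴ * (V i * (V j)ᴴ) = V j * (∑ i, (V i)ᴴ * V i) * (V j)ᴴ := by
          simp only [conjTranspose_mul, conjTranspose_conjTranspose, Matrix.mul_sum,
            Matrix.sum_mul, Matrix.mul_assoc]
      _ = V j * (V j)ᴴ := by rw [hV, Matrix.mul_one]
  rw [qPotential, Finset.sum_comm]
  exact Finset.sum_congr rfl fun j _ => hcol j

theorem trace_sum_mul_conjTranspose {V : Fin m → Matrix (Fin l) (Fin d) 𝕜}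
    (hV : ∑ i, (V i)ᴴ * V i = 1) : (∑ j, V j * (V j)ᴴ).trace = d := by
  simp_rw [trace_sum, trace_mul_comm (V _), ← trace_sum, hV, trace_one, Fintype.card_fin]

theorem qPotential_eq_smul_one {V : Fin m → Matrix (Fin l) (Fin d) 𝕜} (hl : l ≠ 0)
    (hV : ∑ i, (V i)ᴴ * V i = 1) (w : Fin m → 𝕜) (hw : ∀ i, V i * (V i)ᴴ = w i • 1) :
    qPotential V = ((d : 𝕜) / l) • 1 := by
  have hQ : qPotential V = (∑ i, w i) • 1 := by
    rw [qPotential_eq_sum_mul_conjTranspose hV, Finset.sum_smul]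
    exact Finset.sum_congr rfl fun i _ => hw i
  have htr := trace_sum_mul_conjTranspose hV
  rw [← qPotential_eq_sum_mul_conjTranspose hV, hQ, trace_smul, trace_one, Fintype.card_fin,
    smul_eq_mul] at htr
  rw [hQ, ← htr, mul_div_cancel_right₀ _ (Nat.cast_ne_zero.mpr hl)]

end

theorem stmt3_general (m l d : ℕ) (hl : 0 < l)
    (V : Fin m → Matrix (Fin l) (Fin d) ℂ)
    (hproto : ∑ i, (V i)ᴴ * V i = 1)
    (hprojective : ∀ i, ∃ (w : ℝ) (P : Matrix (Fin d) (Fin d) ℂ),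
      0 < w ∧ Pᴴ = P ∧ P * P = P ∧ P.rank = l ∧ (V i)ᴴ * V i = (w : ℂ) • P) :
    qPotential V = ((d : ℂ) / (l : ℂ)) • 1 ∧
    MajMat (((d : ℂ) / (l : ℂ)) • (1 : Matrix (Fin l) (Fin l) ℂ)) (qPotential V) ∧
    (∀ Ψ : UINorm l ℂ, Ψ.N (qPotential V) = (d : ℝ) * (Ψ.N 1 / l)) ∧
    (∀ f : ℝ → ℝ, MonotoneOn f (Set.Ici 0) → ConvexOn ℝ (Set.Ici 0) f → f 0 = 0 →
      ∀ hP : (qPotential V).IsHermitian,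
        ∑ i, f (hP.eigenvalues i) = (l : ℝ) * f ((d : ℝ) / l)) := by
  choose w P hw _ hP hrank hVP using hprojective
  have hQ : qPotential V = ((d : ℂ) / l) • 1 := qPotential_eq_smul_one hl.ne' hproto _
    fun i => mul_conjTranspose_eq_smul_one (by exact_mod_cast (hw i).ne') (hP i)
      (by rw [hrank, Fintype.card_fin]) (hVP i)
  have hQ' : qPotential V = (((d : ℝ) / l : ℝ) : ℂ) • 1 := by
    rw [hQ, Complex.ofReal_div, Complex.ofReal_natCast, Complex.ofReal_natCast]
  have hherm : (qPotential V).IsHermitian := hQ' ▸ isHermitian_one.smul (Complex.conj_ofReal _)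
  refine ⟨hQ, by rw [← hQ]; exact MajMat.refl hherm, fun Ψ => ?_, fun f _ _ _ hP => ?_⟩
  · rw [hQ, Ψ.smul_eq, norm_div, Complex.norm_natCast, Complex.norm_natCast]
    ring
  · simp_rw [hP.eigenvalues_eq_of_eq_smul_one (c := d / l) hQ', Finset.sum_const,
      Finset.card_univ, Fintype.card_fin, nsmul_eq_mul]

theorem stmt3 (m l d : ℕ) (hl : 0 < l) (hld : l < d)
    (V : Fin m → Matrix (Fin l) (Fin d) ℂ)
    (hproto : ∑ i, (V i)ᴴ * V i = 1)
    (hprojective : ∀ i, ∃ (w : ℝ) (P : Matrix (Fin d) (Fin d) ℂ),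
      0 < w ∧ Pᴴ = P ∧ P * P = P ∧ P.rank = l ∧ (V i)ᴴ * V i = (w : ℂ) • P) :
    qPotential V = ((d : ℂ) / (l : ℂ)) • 1 ∧
    MajMat (((d : ℂ) / (l : ℂ)) • (1 : Matrix (Fin l) (Fin l) ℂ)) (qPotential V) ∧
    (∀ Ψ : UINorm l ℂ, Ψ.N (qPotential V) = (d : ℝ) * (Ψ.N 1 / l)) ∧
    (∀ f : ℝ → ℝ, MonotoneOn f (Set.Ici 0) → ConvexOn ℝ (Set.Ici 0) f → f 0 = 0 →
      ∀ hP : (qPotential V).IsHermitian,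
        ∑ i, f (hP.eigenvalues i) = (l : ℝ) * f ((d : ℝ) / l)) :=
  stmt3_general m l d hl V hproto hprojective
end

section
/- Let ‖·‖ be a compatible unitarily invariant norm with associated symmetric gauge function ψ, and let {V_i}_{i=1}^m be an (m,l,d)-protocol with analysis operator V. Then the worst-case reconstruction error for one lost packet satisfies e_1^ψ(V) ≥ d·η_ψ(l)/m. Moreover, if ‖·‖ is strict, then equality holds if and only if {V_i}_{i=1}^m is a uniformly weighted projective rank-l (m,l,d)-protocol. -/
open Matrix BigOperators
open scoped ComplexOrder

/-!
Each `Aᵢ = Vᵢᴴ Vᵢ` is positive semidefinite of rank at most `l`, so it is unitarily equivalent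
to `D ⊕ 0` with `D` a nonnegative `l × l` diagonal matrix. Averaging `D` over its cyclic shifts
and using the triangle inequality gives `‖Aᵢ‖ ≥ tr(Aᵢ) η_ψ(l)`; summing over `i`,
`∑ ‖Aᵢ‖ ≥ tr(I_d) η_ψ(l) = d η_ψ(l)`, so the largest `‖Aᵢ‖` is at least `d η_ψ(l) / m`.
Equality forces `‖Aᵢ‖ = tr(Aᵢ) η_ψ(l) = d η_ψ(l) / m` for every `i`; strictness then makes `D`
scalar, i.e. `Aᵢ = (d/(ml)) Pᵢ` with `Pᵢ` a rank-`l` orthogonal projection. Conversely such a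
projection is unitarily equivalent to `I_l ⊕ 0`, whose norm is `‖I_l‖ = l η_ψ(l)`.
-/

open Unitary

namespace Matrix

theorem trace_eq_rank_of_isIdempotentElem {K n : Type*} [Field K] [Fintype n] [DecidableEq n]
    {P : Matrix n n K} (hP : IsIdempotentElem P) : P.trace = P.rank := by
  have he : IsIdempotentElem (toLin' P) := hP.map toLinAlgEquiv'
  rw [← trace_toLin'_eq, (LinearMap.IsIdempotentElem.isProj_range _ he).trace,
    rank_eq_finrank_range_toLin P (Pi.basisFun K n) (Pi.basisFun K n), toLin_eq_toLin']

variable {𝕜 : Type*} [RCLike 𝕜] {n : Type*} [Fintype n]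

theorem submatrix_id_mem_unitaryGroup [DecidableEq n] {W : Matrix n n 𝕜}
    (hW : W ∈ unitaryGroup n 𝕜) (e : n ≃ n) : W.submatrix id e ∈ unitaryGroup n 𝕜 := by
  rw [mem_unitaryGroup_iff', star_eq_conjTranspose, conjTranspose_submatrix,
    ← submatrix_mul _ _ _ _ _ Function.bijective_id, ← star_eq_conjTranspose,
    mem_unitaryGroup_iff'.mp hW, submatrix_one_equiv]

theorem submatrix_id_mul_submatrix_mul_star (W X : Matrix n n 𝕜) (e : n ≃ n) :
    W.submatrix id e * X.submatrix e e * star (W.submatrix id e) = W * X * star W := by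
  rw [star_eq_conjTranspose, conjTranspose_submatrix, submatrix_mul_equiv _ _ _ e _,
    submatrix_mul_equiv _ _ _ e _, submatrix_id_id, star_eq_conjTranspose]

theorem trace_conjStarAlgAut [DecidableEq n] (U : unitaryGroup n 𝕜) (X : Matrix n n 𝕜) :
    (conjStarAlgAut 𝕜 _ U X).trace = X.trace := by
  rw [conjStarAlgAut_apply, trace_mul_cycle, coe_star_mul_self, one_mul]

end Matrix

theorem Antitone.eq_zero_of_card_ne_zero_le {α : Type*} [PartialOrder α] [Zero α]
    [DecidableEq α] {n l : ℕ} {g : Fin n → α} (hg : Antitone g) (h0 : ∀ i, 0 ≤ g i)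
    (hcard : Fintype.card {i // g i ≠ 0} ≤ l) {j : Fin n} (hj : l ≤ j) : g j = 0 := by
  by_contra hne
  have hpos : 0 < g j := (h0 j).lt_of_ne' hne
  have hsub : Finset.Iic j ⊆ Finset.univ.filter fun i => g i ≠ 0 := fun i hi =>
    Finset.mem_filter.mpr ⟨Finset.mem_univ _, (hpos.trans_le (hg (Finset.mem_Iic.mp hi))).ne'⟩
  have := Finset.card_le_card hsub
  rw [Fin.card_Iic, ← Fintype.card_subtype] at this
  omega

theorem sum_le_card_mul_iSup {ι : Type*} [Fintype ι] (F : ι → ℝ) :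
    ∑ i, F i ≤ Fintype.card ι * ⨆ i, F i := by
  have := Finset.sum_le_card_nsmul Finset.univ F _ fun i _ => le_ciSup (Finite.bddAbove_range F) i
  rwa [Finset.card_univ, nsmul_eq_mul] at this

theorem eq_of_le_of_le_of_sum_eq_card_mul {ι : Type*} [Fintype ι] {a F : ι → ℝ} {c : ℝ}
    (haF : ∀ i, a i ≤ F i) (hFc : ∀ i, F i ≤ c) (hsum : ∑ i, a i = Fintype.card ι * c) (i : ι) :
    a i = c ∧ F i = c := by
  have hac : ∀ i ∈ Finset.univ, a i ≤ c := fun i _ => (haF i).trans (hFc i)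
  have ha : a i = c := (Finset.sum_eq_sum_iff_of_le hac).mp (by simpa using hsum) i (by simp)
  exact ⟨ha, le_antisymm (hFc i) (ha ▸ haF i)⟩

section padMat

variable {𝕜 : Type*} [RCLike 𝕜] {r t : ℕ}

theorem padMat_mul (X Y : Matrix (Fin r) (Fin r) 𝕜) :
    padMat t X * padMat t Y = padMat t (X * Y) := by
  simp [padMat, fromBlocks_multiply]

theorem padMat_smul (c : 𝕜) (X : Matrix (Fin r) (Fin r) 𝕜) :
    padMat t (c • X) = c • padMat t X := by
  ext i j
  induction i using Fin.addCases <;> induction j using Fin.addCases <;> simp [padMat]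

theorem padMat_conjTranspose (X : Matrix (Fin r) (Fin r) 𝕜) :
    (padMat t X)ᴴ = padMat t Xᴴ := by
  simp [padMat, fromBlocks_conjTranspose]

theorem padMat_injective : Function.Injective (padMat (𝕜 := 𝕜) (r := r) t) := by
  intro X Y h
  simpa using congrArg toBlocks₁₁ ((reindex finSumFinEquiv finSumFinEquiv).injective h)

theorem trace_padMat (X : Matrix (Fin r) (Fin r) 𝕜) : (padMat t X).trace = X.trace := by
  simp [padMat, trace, Fin.sum_univ_add]

theorem diagonal_eq_padMat {g : Fin (r + t) → 𝕜} (hg : ∀ j : Fin (r + t), r ≤ j → g j = 0) :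
    diagonal g = padMat t (diagonal (g ∘ Fin.castAdd t)) := by
  ext i j
  induction i using Fin.addCases <;> induction j using Fin.addCases <;>
    simp [padMat, diagonal_apply, hg, Fin.ext_iff]; omega

end padMat

section ConjPadMat

variable {𝕜 : Type*} [RCLike 𝕜] {l t : ℕ}

/-- Sort the eigenvalues decreasingly: those beyond the rank vanish. -/
theorem Matrix.PosSemidef.exists_eq_conj_padMat_diagonal
    {A : Matrix (Fin (l + t)) (Fin (l + t)) 𝕜} (hA : A.PosSemidef) (hr : A.rank ≤ l) :
    ∃ (U : unitaryGroup (Fin (l + t)) 𝕜) (μ : Fin l → ℝ), 0 ≤ μ ∧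
      A = conjStarAlgAut 𝕜 _ U (padMat t (diagonal fun j => (μ j : 𝕜))) := by
  set ev := hA.1.eigenvalues
  set σ := Tuple.sort fun i => -ev i
  set g := ev ∘ σ
  have hg_anti : Antitone g := fun i j hij =>
    neg_le_neg_iff.mp (Tuple.monotone_sort (fun i => -ev i) hij)
  have hcard : Fintype.card {i // g i ≠ 0} ≤ l :=
    (Fintype.card_congr (σ.subtypeEquiv (q := fun i => ev i ≠ 0) fun _ => Iff.rfl)).trans_le
      (hA.1.rank_eq_card_non_zero_eigs ▸ hr)
  have hdiag : diagonal (fun j => (g j : 𝕜)) =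
      padMat t (diagonal fun j => (g (Fin.castAdd t j) : 𝕜)) :=
    diagonal_eq_padMat fun j hj => by
      simp [hg_anti.eq_zero_of_card_ne_zero_le (fun i => hA.eigenvalues_nonneg _) hcard hj]
  refine ⟨⟨_, submatrix_id_mem_unitaryGroup hA.1.eigenvectorUnitary.2 σ⟩,
    fun j => g (Fin.castAdd t j), fun j => hA.eigenvalues_nonneg _, ?_⟩
  rw [conjStarAlgAut_apply, ← hdiag]
  conv_lhs => rw [hA.1.spectral_theorem, conjStarAlgAut_apply]
  rw [← submatrix_id_mul_submatrix_mul_star _ _ σ, submatrix_diagonal_equiv]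
  rfl

theorem trace_conj_padMat_diagonal (U : unitaryGroup (Fin (l + t)) 𝕜) (μ : Fin l → ℝ) :
    (conjStarAlgAut 𝕜 _ U (padMat t (diagonal fun j => (μ j : 𝕜)))).trace =
      ((∑ j, μ j : ℝ) : 𝕜) := by
  rw [trace_conjStarAlgAut, trace_padMat, trace_diagonal, RCLike.ofReal_sum]

end ConjPadMat

namespace CUIN

variable {𝕜 : Type*} [RCLike 𝕜] (Φ : CUIN 𝕜)

theorem N_zero {n : ℕ} : Φ.N n 0 = 0 := by
  simpa using Φ.smul_eq n 0 0

theorem N_sum_le {n : ℕ} {ι : Type*} (s : Finset ι) (f : ι → Matrix (Fin n) (Fin n) 𝕜) :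
    Φ.N n (∑ i ∈ s, f i) ≤ ∑ i ∈ s, Φ.N n (f i) :=
  Finset.le_sum_of_subadditive _ Φ.N_zero.le (Φ.triangle n) s f

theorem N_conjStarAlgAut {n : ℕ} (U : unitaryGroup (Fin n) 𝕜) (A : Matrix (Fin n) (Fin n) 𝕜) :
    Φ.N n (conjStarAlgAut 𝕜 _ U A) = Φ.N n A :=
  Φ.invariant n A U (star U)

theorem N_conj_padMat {l t : ℕ} (U : unitaryGroup (Fin (l + t)) 𝕜)
    (X : Matrix (Fin l) (Fin l) 𝕜) :
    Φ.N (l + t) (conjStarAlgAut 𝕜 _ U (padMat t X)) = Φ.N l X := by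
  rw [Φ.N_conjStarAlgAut, Φ.compatible]

theorem N_submatrix_equiv {n : ℕ} (e : Fin n ≃ Fin n) (A : Matrix (Fin n) (Fin n) 𝕜) :
    Φ.N n (A.submatrix e e) = Φ.N n A := by
  let U : unitaryGroup (Fin n) 𝕜 := ⟨_, submatrix_id_mem_unitaryGroup (one_mem _) e⟩
  rw [← Φ.N_conjStarAlgAut U, conjStarAlgAut_apply]
  simp only [U, submatrix_id_mul_submatrix_mul_star, one_mul, star_one, mul_one]

theorem eta_pos {l : ℕ} (hl : 0 < l) : 0 < Φ.eta l := by
  have : NeZero l := ⟨hl.ne'⟩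
  exact div_pos ((Φ.nonneg l 1).lt_of_ne' fun h => one_ne_zero (Φ.eq_zero l 1 h))
    (by exact_mod_cast hl)

/-- The cyclic shifts of `diagonal v` sum to `(∑ j, v j) • 1`. -/
theorem sum_mul_eta_le_N_diagonal {n : ℕ} (v : Fin n → ℝ) (hv : 0 ≤ v) :
    (∑ j, v j) * Φ.eta n ≤ Φ.N n (diagonal fun j => (v j : 𝕜)) := by
  rcases n.eq_zero_or_pos with rfl | hn
  · simpa using Φ.nonneg 0 _
  have : NeZero n := ⟨hn.ne'⟩
  set w : Fin n → 𝕜 := fun j => (v j : 𝕜)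
  have hshifts : ∑ s : Fin n, diagonal (w ∘ Equiv.addRight s) = ((∑ j, v j : ℝ) : 𝕜) • 1 := by
    have := map_sum (diagonalAddMonoidHom (Fin n) 𝕜) (fun s => w ∘ Equiv.addRight s) Finset.univ
    simp only [diagonalAddMonoidHom_apply] at this
    rw [← this, smul_one_eq_diagonal]
    congr 1
    funext i
    simp only [Finset.sum_apply, Function.comp_apply, Equiv.coe_addRight, w, RCLike.ofReal_sum]
    exact Fintype.sum_equiv (Equiv.addLeft i) _ _ fun _ => rfl
  have hsum_le : (∑ j, v j) * Φ.N n 1 ≤ n * Φ.N n (diagonal w) :=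
    calc (∑ j, v j) * Φ.N n 1 = Φ.N n (((∑ j, v j : ℝ) : 𝕜) • 1) := by
          rw [Φ.smul_eq, RCLike.norm_ofReal, abs_of_nonneg (Finset.sum_nonneg fun j _ => hv j)]
      _ ≤ ∑ s : Fin n, Φ.N n (diagonal (w ∘ Equiv.addRight s)) := hshifts ▸ Φ.N_sum_le _ _
      _ = n * Φ.N n (diagonal w) := by
          simp_rw [← submatrix_diagonal_equiv, N_submatrix_equiv]
          simp
  rw [eta, mul_div_assoc', div_le_iff₀ (by exact_mod_cast hn)]
  linarith

variable {l t : ℕ}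

theorem re_trace_mul_eta_le_N {A : Matrix (Fin (l + t)) (Fin (l + t)) 𝕜} (hA : A.PosSemidef)
    (hr : A.rank ≤ l) : RCLike.re A.trace * Φ.eta l ≤ Φ.N (l + t) A := by
  obtain ⟨U, μ, hμ, rfl⟩ := hA.exists_eq_conj_padMat_diagonal hr
  rw [Φ.N_conj_padMat, trace_conj_padMat_diagonal, RCLike.ofReal_re]
  exact Φ.sum_mul_eta_le_N_diagonal μ hμ

theorem exists_projection_of_N_eq (hS : Φ.Strict) {A : Matrix (Fin (l + t)) (Fin (l + t)) 𝕜}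
    (hA : A.PosSemidef) (hr : A.rank ≤ l) (h : Φ.N (l + t) A = RCLike.re A.trace * Φ.eta l) :
    ∃ P : Matrix (Fin (l + t)) (Fin (l + t)) 𝕜, Pᴴ = P ∧ P * P = P ∧ P.rank = l ∧
      A = ((RCLike.re A.trace : 𝕜) / l) • P := by
  obtain ⟨U, μ, hμ, rfl⟩ := hA.exists_eq_conj_padMat_diagonal hr
  set D : Matrix (Fin l) (Fin l) 𝕜 := diagonal fun j => (μ j : 𝕜)
  have htrD : D.trace = ((∑ j, μ j : ℝ) : 𝕜) := by
    rw [trace_diagonal, RCLike.ofReal_sum]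
  have hD : D = ((∑ j, μ j : ℝ) / l : 𝕜) • 1 := by
    rw [← htrD]
    refine hS l D (PosSemidef.diagonal fun j => RCLike.ofReal_nonneg.mpr (hμ j)) ?_
    rwa [Φ.N_conj_padMat, trace_conj_padMat_diagonal, ← htrD] at h
  set P := conjStarAlgAut 𝕜 _ U (padMat t 1)
  have hPP : P * P = P := by rw [← map_mul, padMat_mul, mul_one]
  refine ⟨P, ?_, hPP, ?_, ?_⟩
  · rw [← star_eq_conjTranspose, ← map_star, star_eq_conjTranspose, padMat_conjTranspose,
      conjTranspose_one]
  · have := trace_eq_rank_of_isIdempotentElem hPP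
    rw [trace_conjStarAlgAut, trace_padMat, trace_one, Fintype.card_fin] at this
    exact_mod_cast this.symm
  · rw [trace_conj_padMat_diagonal, RCLike.ofReal_re, hD, padMat_smul, map_smul]

theorem N_eq_N_one_of_projection {P : Matrix (Fin (l + t)) (Fin (l + t)) 𝕜} (hPh : Pᴴ = P)
    (hPP : P * P = P) (hr : P.rank = l) : Φ.N (l + t) P = Φ.N l 1 := by
  have hPsd : P.PosSemidef := by
    simpa [hPh, hPP] using posSemidef_conjTranspose_mul_self P
  have htr : (P.rank : 𝕜) = P.trace := (trace_eq_rank_of_isIdempotentElem hPP).symm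
  obtain ⟨U, μ, hμ, rfl⟩ := hPsd.exists_eq_conj_padMat_diagonal hr.le
  have hidem : ∀ j, μ j * μ j = μ j := by
    have hDD : diagonal (fun j => (μ j : 𝕜)) * diagonal (fun j => (μ j : 𝕜)) =
        diagonal (fun j => (μ j : 𝕜)) :=
      padMat_injective <| (conjStarAlgAut 𝕜 _ U).injective <| by rwa [← padMat_mul, map_mul]
    rw [diagonal_mul_diagonal] at hDD
    intro j
    exact_mod_cast congrFun (diagonal_injective hDD) j
  have hsum : ∑ j, μ j = l := by
    rw [trace_conj_padMat_diagonal, hr] at htr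
    exact_mod_cast htr.symm
  have hone : ∀ j, μ j = 1 := by
    have hle : ∀ j ∈ Finset.univ, μ j ≤ 1 := fun j _ => by nlinarith [hidem j, hμ j]
    simpa using (Finset.sum_eq_sum_iff_of_le hle).mp (by simp [hsum])
  rw [Φ.N_conj_padMat]
  simp [hone]

theorem N_natCast_div_smul_projection (d m : ℕ) {P : Matrix (Fin (l + t)) (Fin (l + t)) 𝕜}
    (hPh : Pᴴ = P) (hPP : P * P = P) (hr : P.rank = l) :
    Φ.N (l + t) (((d : 𝕜) / (m * l)) • P) = d * Φ.eta l / m := by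
  rw [Φ.smul_eq, Φ.N_eq_N_one_of_projection hPh hPP hr, eta, norm_div, norm_mul,
    RCLike.norm_natCast, RCLike.norm_natCast, RCLike.norm_natCast]
  ring

end CUIN

theorem errP_one_eq_iSup {𝕜 : Type*} [RCLike 𝕜] {m l d : ℕ} (Φ : CUIN 𝕜)
    (V : Fin m → Matrix (Fin l) (Fin d) 𝕜) :
    errP Φ 1 V = ⨆ i, Φ.N d ((V i)ᴴ * V i) := by
  rw [errP, iSup]
  congr 1
  ext r
  simp [Finset.card_eq_one, eq_comm]

theorem stmt7 {𝕜 : Type*} [RCLike 𝕜] (m l d : ℕ) (hm : 0 < m) (hl : 0 < l) (hld : l < d)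
    (Φ : CUIN 𝕜) (V : Fin m → Matrix (Fin l) (Fin d) 𝕜)
    (hproto : ∑ i, (V i)ᴴ * V i = 1) :
    (d : ℝ) * Φ.eta l / m ≤ errP Φ 1 V ∧
    (Φ.Strict → (errP Φ 1 V = (d : ℝ) * Φ.eta l / m ↔ IsUWPProj V)) := by
  obtain ⟨t, rfl⟩ := Nat.exists_eq_add_of_le hld.le
  set A := fun i => (V i)ᴴ * V i
  have hA : ∀ i, (A i).PosSemidef := fun i => posSemidef_conjTranspose_mul_self _
  have hr : ∀ i, (A i).rank ≤ l := fun i =>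
    (rank_conjTranspose_mul_self _).trans_le (rank_le_height _)
  have hlow := fun i => Φ.re_trace_mul_eta_le_N (hA i) (hr i)
  have htr : ∑ i, RCLike.re (A i).trace * Φ.eta l = (l + t : ℕ) * Φ.eta l := by
    rw [← Finset.sum_mul, ← map_sum, ← trace_sum, hproto, trace_one]
    simp
  rw [errP_one_eq_iSup]
  refine ⟨?_, fun hS => ⟨fun heq => ⟨hproto, fun i => ?_⟩, fun ⟨_, hP⟩ => ?_⟩⟩
  · rw [div_le_iff₀' (by exact_mod_cast hm), ← htr]
    simpa using (Finset.sum_le_sum fun i _ => hlow i).trans (sum_le_card_mul_iSup _)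
  · obtain ⟨htrace_i, hN_i⟩ := eq_of_le_of_le_of_sum_eq_card_mul hlow
      (fun j => heq ▸ le_ciSup (Finite.bddAbove_range _) j)
      (by rw [htr, Fintype.card_fin]; field_simp) i
    obtain ⟨P, hPh, hPP, hPr, hAP⟩ :=
      Φ.exists_projection_of_N_eq hS (hA i) (hr i) (hN_i.trans htrace_i.symm)
    rw [mul_div_right_comm] at htrace_i
    refine ⟨P, hPh, hPP, hPr, hAP.trans ?_⟩
    rw [mul_right_cancel₀ (Φ.eta_pos hl).ne' htrace_i, RCLike.ofReal_div, RCLike.ofReal_natCast,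
      RCLike.ofReal_natCast, div_div]
  · have hF : ∀ i, Φ.N (l + t) ((V i)ᴴ * V i) = (l + t : ℕ) * Φ.eta l / m := fun i => by
      obtain ⟨P, hPh, hPP, hPr, hAP⟩ := hP i
      rw [hAP, Φ.N_natCast_div_smul_projection _ _ hPh hPP hPr]
    have : NeZero m := ⟨hm.ne'⟩
    simp_rw [hF, ciSup_const]
end

section
/- Let ‖·‖ be a compatible unitarily invariant norm with associated symmetric gauge function ψ. If {V_i}_{i=1}^m is a uniformly weighted projective rank-l (m,l,d)-protocol such that V_i V_j* = c_{m,l,d}·Q_{ij} for unitary operators Q_{ij} on 𝔽^l for all i ≠ j, then max_{i≠j} tr(|V_i V_j*|) ≥ l·c_{m,l,d} and e_2^ψ(V) = ψ( ((d/(ml)) + c_{m,l,d})·e_l , ((d/(ml)) − c_{m,l,d})·e_l ). -/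
open Matrix BigOperators
open scoped ComplexOrder

/-!
Write `α = d/(ml)` and `c = c_{m,l,d}`, so that `c < α` exactly because `l < d`. For `i ≠ j`
put `X = Vᵢ` and `W = Q Vⱼ`, where `Vᵢ Vⱼ* = c Q`; then `X X* = W W* = α I`, `X W* = c I` and
`W* W = Vⱼ* Vⱼ`. The `d × 2l` matrix `B` with column blocks `(X + W)*` and `(X - W)*` satisfies
`B* B = 2 diag((α + c) I_l, (α - c) I_l)` and `B B* = 2 (X* X + W* W)`. Normalising the columns of
`B` gives an isometry, which extends to a unitary, so `Vᵢ* Vᵢ + Vⱼ* Vⱼ` is unitarily equivalent to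
`diag((α + c) I_l, (α - c) I_l) ⊕ 0`. Unitary invariance and compatibility of the norm then give
the same value `ψ(...)` for every pair of erasures. The trace bound is an equality: `|c Q| = c I`.
-/

section

variable {𝕜 : Type*} [RCLike 𝕜]

theorem Matrix.IsHermitian.eigenvalues_eq_of_eq_smul_one_s9 {n : Type*} [Fintype n] [DecidableEq n]
    {A : Matrix n n 𝕜} (hA : A.IsHermitian) {r : ℝ} (h : A = (r : 𝕜) • 1) (i : n) :
    hA.eigenvalues i = r := by
  subst h
  rw [hA.eigenvalues_eq, smul_mulVec, one_mulVec, dotProduct_smul, smul_eq_mul, dotProduct_comm,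
    ← EuclideanSpace.inner_eq_star_dotProduct, inner_self_eq_norm_sq_to_K,
    hA.eigenvectorBasis.orthonormal.1 i]
  simp

theorem traceAbs_ofReal_smul_of_mem_unitaryGroup {n : ℕ} {Q : Matrix (Fin n) (Fin n) 𝕜}
    (hQ : Q ∈ unitaryGroup (Fin n) 𝕜) {c : ℝ} (hc : 0 ≤ c) :
    traceAbs ((c : 𝕜) • Q) = n * c := by
  have hcQ : ((c : 𝕜) • Q)ᴴ * ((c : 𝕜) • Q) = ((c ^ 2 : ℝ) : 𝕜) • 1 := by
    rw [conjTranspose_smul, Matrix.smul_mul, Matrix.mul_smul, ← star_eq_conjTranspose,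
      mem_unitaryGroup_iff'.1 hQ, smul_smul]
    simp [sq]
  rw [traceAbs, Finset.sum_congr rfl fun j _ => by
    rw [IsHermitian.eigenvalues_eq_of_eq_smul_one_s9 _ hcQ]]
  simp [Real.sqrt_sq hc]

theorem Matrix.orthonormal_cols_iff {m n : Type*} [Fintype m] [DecidableEq n] (M : Matrix m n 𝕜) :
    Orthonormal 𝕜 (fun j => WithLp.toLp 2 (fun i => M i j)) ↔ Mᴴ * M = 1 := by
  rw [orthonormal_iff_ite, ← Matrix.ext_iff]
  refine forall₂_congr fun j j' => ?_
  rw [EuclideanSpace.inner_toLp_toLp, Matrix.mul_apply, Matrix.one_apply, dotProduct]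
  simp only [conjTranspose_apply, Pi.star_apply, mul_comm]

theorem Matrix.exists_mem_unitaryGroup_submatrix_eq {m n : Type*} [Fintype m] [Fintype n]
    [DecidableEq m] [DecidableEq n] (M : Matrix m n 𝕜) (hM : Mᴴ * M = 1) {f : n → m}
    (hf : Function.Injective f) :
    ∃ U ∈ unitaryGroup m 𝕜, U.submatrix id f = M := by
  set col : n → EuclideanSpace 𝕜 m := fun j => WithLp.toLp 2 (fun i => M i j)
  have hcol : Orthonormal 𝕜 col := M.orthonormal_cols_iff.2 hM
  have hrestrict : Orthonormal 𝕜 ((Set.range f).domRestrict (Function.extend f col 0)) := by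
    convert hcol.comp _ (Equiv.ofInjective f hf).symm.injective
    ext ⟨_, j, rfl⟩ : 1
    simp [hf.extend_apply]
  obtain ⟨b, hb⟩ := hrestrict.exists_orthonormalBasis_extension_of_card_eq (by simp)
  refine ⟨(EuclideanSpace.basisFun m 𝕜).toBasis.toMatrix b,
    (EuclideanSpace.basisFun m 𝕜).toMatrix_orthonormalBasis_mem_unitary b, ?_⟩
  ext i j
  rw [submatrix_apply, id, Module.Basis.toMatrix_apply]
  simp [hb (f j) ⟨j, rfl⟩, hf.extend_apply, col]

theorem padMat_eq_submatrix_one_mul {k t : ℕ} (A : Matrix (Fin k) (Fin k) 𝕜) :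
    padMat t A = (1 : Matrix (Fin (k + t)) (Fin (k + t)) 𝕜).submatrix id (Fin.castAdd t) * A *
      ((1 : Matrix (Fin (k + t)) (Fin (k + t)) 𝕜).submatrix id (Fin.castAdd t))ᴴ := by
  have hne (a : Fin k) (b : Fin t) : Fin.castAdd t a ≠ Fin.natAdd k b := by
    rw [Ne, Fin.ext_iff]; simp; omega
  ext i i'
  induction i using Fin.addCases <;> induction i' using Fin.addCases <;>
    simp [padMat, Matrix.mul_apply, Matrix.one_apply, hne, (hne _ _).symm]

theorem Matrix.fromCols_submatrix_conjTranspose_mul_self {d k k' : ℕ}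
    {P : Matrix (Fin d) (Fin k) 𝕜} {R : Matrix (Fin d) (Fin k') 𝕜} {p q : ℝ}
    (hP : Pᴴ * P = (p : 𝕜) • 1) (hR : Rᴴ * R = (q : 𝕜) • 1) (hPR : Pᴴ * R = 0) :
    ((fromCols P R).submatrix id finSumFinEquiv.symm)ᴴ *
        (fromCols P R).submatrix id finSumFinEquiv.symm
      = diagonal fun i => ((Fin.append (fun _ : Fin k => p) (fun _ : Fin k' => q) i : ℝ) : 𝕜) := by
  have hRP : Rᴴ * P = 0 := by simpa using congrArg conjTranspose hPR
  rw [conjTranspose_submatrix, conjTranspose_fromCols_eq_fromRows_conjTranspose,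
    ← submatrix_mul _ _ _ _ _ Function.bijective_id, fromRows_mul_fromCols, hP, hR, hPR, hRP,
    smul_one_eq_diagonal, smul_one_eq_diagonal, fromBlocks_diagonal, submatrix_diagonal_equiv]
  congr 1
  funext i
  induction i using Fin.addCases <;> simp

theorem CUIN.norm_unitary_mul_mul_star (Φ : CUIN 𝕜) {n : ℕ} (A : Matrix (Fin n) (Fin n) 𝕜)
    {U : Matrix (Fin n) (Fin n) 𝕜} (hU : U ∈ unitaryGroup (Fin n) 𝕜) :
    Φ.N n (U * A * star U) = Φ.N n A :=
  Φ.invariant n A ⟨U, hU⟩ ⟨star U, Unitary.star_mem hU⟩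

theorem CUIN.norm_mul_mul_conjTranspose_of_isometry (Φ : CUIN 𝕜) {n k : ℕ}
    {M : Matrix (Fin n) (Fin k) 𝕜} (hM : Mᴴ * M = 1) (A : Matrix (Fin k) (Fin k) 𝕜) :
    Φ.N n (M * A * Mᴴ) = Φ.N k A := by
  have hkn : k ≤ n := by
    simpa [hM] using (rank_conjTranspose_mul_self M).trans_le M.rank_le_card_height
  obtain ⟨t, rfl⟩ : ∃ t, n = k + t := ⟨n - k, by omega⟩
  obtain ⟨U, hU, rfl⟩ := M.exists_mem_unitaryGroup_submatrix_eq hM (Fin.castAdd_injective k t)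
  set E := (1 : Matrix (Fin (k + t)) (Fin (k + t)) 𝕜).submatrix id (Fin.castAdd t)
  have hUE : U * E = U.submatrix id (Fin.castAdd t) := by
    simpa using mul_submatrix_one (Equiv.refl (Fin (k + t))) (Fin.castAdd t) U
  have hassoc : U * E * A * (U * E)ᴴ = U * (E * A * Eᴴ) * star U := by
    simp only [conjTranspose_mul, star_eq_conjTranspose, Matrix.mul_assoc]
  rw [← hUE, hassoc, ← padMat_eq_submatrix_one_mul, Φ.norm_unitary_mul_mul_star _ hU,
    Φ.compatible]

theorem CUIN.norm_mul_conjTranspose_of_conjTranspose_mul_eq_diagonal (Φ : CUIN 𝕜) {n k : ℕ}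
    {B : Matrix (Fin n) (Fin k) 𝕜} {x : Fin k → ℝ} (hx : ∀ i, 0 < x i)
    (hB : Bᴴ * B = diagonal fun i => (x i : 𝕜)) :
    Φ.N n (B * Bᴴ) = Φ.psi x := by
  set S : Matrix (Fin k) (Fin k) 𝕜 := diagonal fun i => ((√(x i))⁻¹ : ℝ)
  have hS : Sᴴ = S := by simp [S, diagonal_conjTranspose]
  have hSxS : S * (diagonal fun i => (x i : 𝕜)) * S = 1 := by
    rw [diagonal_mul_diagonal, diagonal_mul_diagonal, ← diagonal_one]
    congr 1
    funext i
    have hpos : 0 < √(x i) := Real.sqrt_pos.2 (hx i)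
    have : (√(x i))⁻¹ * x i * (√(x i))⁻¹ = 1 := by
      field_simp
      exact (Real.sq_sqrt (hx i).le).symm
    exact_mod_cast this
  have hM : (B * S)ᴴ * (B * S) = 1 := by
    rw [conjTranspose_mul, hS, Matrix.mul_assoc, ← Matrix.mul_assoc Bᴴ, hB, ← Matrix.mul_assoc,
      hSxS]
  have hBB : B * Bᴴ = B * S * (diagonal fun i => (x i : 𝕜)) * (B * S)ᴴ :=
    calc B * Bᴴ = B * (S * (diagonal fun i => (x i : 𝕜)) * S) * Bᴴ := by rw [hSxS, Matrix.mul_one]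
      _ = B * S * (diagonal fun i => (x i : 𝕜)) * (B * S)ᴴ := by
        rw [conjTranspose_mul, hS]; simp only [Matrix.mul_assoc]
  rw [hBB, Φ.norm_mul_mul_conjTranspose_of_isometry hM]
  rfl

theorem CUIN.psi_const_mul (Φ : CUIN 𝕜) {n : ℕ} {r : ℝ} (hr : 0 ≤ r) (x : Fin n → ℝ) :
    Φ.psi (fun i => r * x i) = r * Φ.psi x := by
  have : (diagonal fun i => ((r * x i : ℝ) : 𝕜)) = (r : 𝕜) • diagonal fun i => (x i : 𝕜) := by
    rw [← diagonal_smul]; simp [Pi.smul_def]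
  rw [psi, this, Φ.smul_eq, RCLike.norm_ofReal, abs_of_nonneg hr, psi]

theorem CUIN.norm_conjTranspose_mul_add_of_mul_conjTranspose_eq (Φ : CUIN 𝕜) {l d : ℕ}
    {X W : Matrix (Fin l) (Fin d) 𝕜} {α c : ℝ} (hX : X * Xᴴ = (α : 𝕜) • 1)
    (hW : W * Wᴴ = (α : 𝕜) • 1) (hXW : X * Wᴴ = (c : 𝕜) • 1) (hc : |c| < α) :
    Φ.N d (Xᴴ * X + Wᴴ * W)
      = Φ.psi (Fin.append (fun _ : Fin l => α + c) (fun _ : Fin l => α - c)) := by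
  have hWX : W * Xᴴ = (c : 𝕜) • 1 := by
    rw [← conjTranspose_conjTranspose W, ← conjTranspose_mul, hXW]; simp
  set P := (X + W)ᴴ
  set R := (X - W)ᴴ
  have hP : Pᴴ * P = ((2 * (α + c) : ℝ) : 𝕜) • 1 := by
    simp only [P, conjTranspose_conjTranspose, conjTranspose_add, Matrix.add_mul, Matrix.mul_add,
      hX, hW, hXW, hWX]
    push_cast; module
  have hR : Rᴴ * R = ((2 * (α - c) : ℝ) : 𝕜) • 1 := by
    simp only [R, conjTranspose_conjTranspose, conjTranspose_sub, Matrix.sub_mul, Matrix.mul_sub,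
      hX, hW, hXW, hWX]
    push_cast; module
  have hPR : Pᴴ * R = 0 := by
    simp only [P, R, conjTranspose_conjTranspose, conjTranspose_sub, Matrix.add_mul,
      Matrix.mul_sub, hX, hW, hXW, hWX]
    module
  have hBB : (fromCols P R).submatrix id finSumFinEquiv.symm *
      ((fromCols P R).submatrix id finSumFinEquiv.symm)ᴴ = (2 : 𝕜) • (Xᴴ * X + Wᴴ * W) := by
    rw [conjTranspose_submatrix, submatrix_mul_equiv, submatrix_id_id,
      conjTranspose_fromCols_eq_fromRows_conjTranspose, fromCols_mul_fromRows]
    simp only [P, R, conjTranspose_conjTranspose, conjTranspose_add, conjTranspose_sub,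
      Matrix.add_mul, Matrix.mul_add, Matrix.sub_mul, Matrix.mul_sub]
    module
  have hpos (i : Fin (l + l)) :
      0 < Fin.append (fun _ : Fin l => 2 * (α + c)) (fun _ : Fin l => 2 * (α - c)) i := by
    obtain ⟨h₁, h₂⟩ := abs_lt.1 hc
    induction i using Fin.addCases <;> simp only [Fin.append_left, Fin.append_right] <;> linarith
  have hx : Fin.append (fun _ : Fin l => 2 * (α + c)) (fun _ : Fin l => 2 * (α - c))
      = fun i => 2 * Fin.append (fun _ : Fin l => α + c) (fun _ : Fin l => α - c) i := by
    funext i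
    induction i using Fin.addCases <;> simp only [Fin.append_left, Fin.append_right]
  have key := Φ.norm_mul_conjTranspose_of_conjTranspose_mul_eq_diagonal hpos
    (fromCols_submatrix_conjTranspose_mul_self hP hR hPR)
  rw [hBB, Φ.smul_eq, hx, Φ.psi_const_mul zero_le_two] at key
  simpa using key

theorem CUIN.norm_conjTranspose_mul_add_of_mul_conjTranspose_eq_smul_unitary (Φ : CUIN 𝕜)
    {l d : ℕ} {X Y : Matrix (Fin l) (Fin d) 𝕜} {Q : Matrix (Fin l) (Fin l) 𝕜}
    (hQ : Q ∈ unitaryGroup (Fin l) 𝕜) {α c : ℝ} (hX : X * Xᴴ = (α : 𝕜) • 1)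
    (hY : Y * Yᴴ = (α : 𝕜) • 1) (hXY : X * Yᴴ = (c : 𝕜) • Q) (hc : |c| < α) :
    Φ.N d (Xᴴ * X + Yᴴ * Y)
      = Φ.psi (Fin.append (fun _ : Fin l => α + c) (fun _ : Fin l => α - c)) := by
  have hQQ : Q * Qᴴ = 1 := by simpa [star_eq_conjTranspose] using (mem_unitaryGroup_iff.1 hQ)
  have hQQ' : Qᴴ * Q = 1 := by simpa [star_eq_conjTranspose] using (mem_unitaryGroup_iff'.1 hQ)
  have hW : Q * Y * (Q * Y)ᴴ = (α : 𝕜) • 1 := by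
    rw [conjTranspose_mul, Matrix.mul_assoc, ← Matrix.mul_assoc Y, hY, Matrix.smul_mul,
      Matrix.one_mul, Matrix.mul_smul, hQQ]
  have hXW : X * (Q * Y)ᴴ = (c : 𝕜) • 1 := by
    rw [conjTranspose_mul, ← Matrix.mul_assoc, hXY, Matrix.smul_mul, hQQ]
  have hWW : (Q * Y)ᴴ * (Q * Y) = Yᴴ * Y := by
    rw [conjTranspose_mul, Matrix.mul_assoc, ← Matrix.mul_assoc Qᴴ, hQQ', Matrix.one_mul]
  rw [← hWW]
  exact Φ.norm_conjTranspose_mul_add_of_mul_conjTranspose_eq hX hW hXW hc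

theorem errP_two_eq_of_forall_ne {m l d : ℕ} (hm : 1 < m) (Φ : CUIN 𝕜)
    (V : Fin m → Matrix (Fin l) (Fin d) 𝕜) {r : ℝ}
    (hV : ∀ i j, i ≠ j → Φ.N d ((V i)ᴴ * V i + (V j)ᴴ * V j) = r) :
    errP Φ 2 V = r := by
  have hne : (⟨0, by omega⟩ : Fin m) ≠ ⟨1, hm⟩ := by simp
  suffices {r' | ∃ K : Finset (Fin m), K.card = 2 ∧ r' = Φ.N d (∑ i ∈ K, (V i)ᴴ * V i)} = {r} by
    rw [errP, this, csSup_singleton]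
  ext r'
  constructor
  · rintro ⟨K, hK, rfl⟩
    obtain ⟨i, j, hij, rfl⟩ := Finset.card_eq_two.1 hK
    rw [Finset.sum_pair hij, hV i j hij, Set.mem_singleton_iff]
  · rintro rfl
    exact ⟨_, Finset.card_pair hne, by rw [Finset.sum_pair hne, hV _ _ hne]⟩

theorem cmld_lt {m l d : ℕ} (hm : 1 < m) (hl : 0 < l) (hld : l < d) :
    cmld m l d < d / (m * l) := by
  have hm' : (1 : ℝ) < m := by exact_mod_cast hm
  have hl' : (0 : ℝ) < l := by exact_mod_cast hl
  have hld' : (l : ℝ) < d := by exact_mod_cast hld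
  have hml : (0 : ℝ) < m * l := by positivity
  have hd : (0 : ℝ) < d := by linarith
  rw [cmld, Real.sqrt_lt' (by positivity)]
  calc (d : ℝ) / ((m - 1) * m * l) * (1 - d / (m * l))
      = d / (m * l) ^ 2 * ((m * l - d) / (m - 1)) := by
        field_simp
    _ < d / (m * l) ^ 2 * d := by
        gcongr
        rw [div_lt_iff₀ (by linarith)]
        nlinarith
    _ = (d / (m * l)) ^ 2 := by ring

end

theorem stmt9_general {𝕜 : Type*} [RCLike 𝕜] (m l d : ℕ) (hm : 2 ≤ m) (hl : 0 < l) (hld : l < d)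
    (Φ : CUIN 𝕜) (V : Fin m → Matrix (Fin l) (Fin d) 𝕜)
    (huwp : IsUWP V)
    (hQ : ∀ i j : Fin m, i ≠ j → ∃ Q ∈ Matrix.unitaryGroup (Fin l) 𝕜,
      V i * (V j)ᴴ = (cmld m l d : 𝕜) • Q) :
    (∃ i j : Fin m, i ≠ j ∧ (l : ℝ) * cmld m l d ≤ traceAbs (V i * (V j)ᴴ)) ∧
    errP Φ 2 V = Φ.psi (Fin.append (fun _ : Fin l => (d : ℝ) / ((m : ℝ) * l) + cmld m l d)
        (fun _ : Fin l => (d : ℝ) / ((m : ℝ) * l) - cmld m l d)) := by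
  have hc : 0 ≤ cmld m l d := Real.sqrt_nonneg _
  have hcα : |cmld m l d| < d / (m * l) := (abs_of_nonneg hc).trans_lt (cmld_lt hm hl hld)
  have hVV (i : Fin m) : V i * (V i)ᴴ = (((d : ℝ) / (m * l) : ℝ) : 𝕜) • 1 := by
    rw [huwp.2 i]; push_cast; rfl
  have hne : (⟨0, by omega⟩ : Fin m) ≠ ⟨1, hm⟩ := by simp
  refine ⟨⟨_, _, hne, ?_⟩, errP_two_eq_of_forall_ne hm Φ V fun i j hij => ?_⟩
  · obtain ⟨Q, hQu, hVQ⟩ := hQ _ _ hne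
    rw [hVQ, traceAbs_ofReal_smul_of_mem_unitaryGroup hQu hc]
  · obtain ⟨Q, hQu, hVQ⟩ := hQ i j hij
    exact Φ.norm_conjTranspose_mul_add_of_mul_conjTranspose_eq_smul_unitary hQu (hVV i) (hVV j)
      hVQ hcα

theorem stmt9 {𝕜 : Type*} [RCLike 𝕜] (m l d : ℕ) (hm : 2 ≤ m) (hl : 0 < l) (hld : l < d)
    (hdm : d < m * l)
    (Φ : CUIN 𝕜) (V : Fin m → Matrix (Fin l) (Fin d) 𝕜)
    (huwp : IsUWP V)
    (hQ : ∀ i j : Fin m, i ≠ j → ∃ Q ∈ Matrix.unitaryGroup (Fin l) 𝕜,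
      V i * (V j)ᴴ = (cmld m l d : 𝕜) • Q) :
    (∃ i j : Fin m, i ≠ j ∧ (l : ℝ) * cmld m l d ≤ traceAbs (V i * (V j)ᴴ)) ∧
    errP Φ 2 V = Φ.psi (Fin.append (fun _ : Fin l => (d : ℝ) / ((m : ℝ) * l) + cmld m l d)
        (fun _ : Fin l => (d : ℝ) / ((m : ℝ) * l) - cmld m l d)) :=
  stmt9_general m l d hm hl hld Φ V huwp hQ
end
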